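/- Let F and G be finite transitive frames validating Wid_1^+ whose inverse skeletons are finite trees, with representation trees rt(F) and rt(G). If rt(F) ⊑ rt(G), then G is reducible to F. -/

import Mathlib

/-- A Kripke frame: a set of worlds with a binary relation. -/
structure Frame where
  World : Type
  rel : World → World → Prop

/-- `f` is a reduction (surjective p-morphism) of `F` to `G`. -/
def Reduction (F G : Frame) (f : F.World → G.World) : Prop :=
  Function.Surjective f ∧
  (∀ w u, F.rel w u → G.rel (f w) (f u)) ∧
  (∀ w v, G.rel (f w) v → ∃ u, F.rel w u ∧ f u = v)

/-- `F` is reducible to `G`. -/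
def Reducible (F G : Frame) : Prop := ∃ f, Reduction F G f

/-- The subframe of `F` generated by the point `w`. -/
def Frame.genSub (F : Frame) (w : F.World) : Frame :=
  ⟨{v // Relation.ReflTransGen F.rel w v}, fun a b => F.rel a.1 b.1⟩

/-- Modal formulas over countably many propositional variables. -/
inductive Formula where
  | var : ℕ → Formula
  | bot : Formula
  | imp : Formula → Formula → Formula
  | box : Formula → Formula
deriving DecidableEq

namespace Formula

def neg (a : Formula) : Formula := .imp a .bot
def top : Formula := .imp .bot .bot
def and (a b : Formula) : Formula := neg (.imp a (neg b))
def or (a b : Formula) : Formula := .imp (neg a) b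
def dia (a : Formula) : Formula := neg (.box (neg a))

/-- Finite conjunction of a list of formulas. -/
def bigConj (l : List Formula) : Formula := l.foldr and top

/-- Finite disjunction of a list of formulas. -/
def bigDisj (l : List Formula) : Formula := l.foldr or .bot

end Formula

/-- Kripke satisfaction of a formula at a world of `F` under valuation `V`. -/
def Sat (F : Frame) (V : ℕ → F.World → Prop) : F.World → Formula → Prop
  | w, .var n => V n w
  | _, .bot => False
  | w, .imp a b => Sat F V w a → Sat F V w b
  | w, .box a => ∀ u, F.rel w u → Sat F V u a

/-- `φ` is valid at the point `w` of `F` (true under all valuations). -/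
def SatAll (F : Frame) (w : F.World) (φ : Formula) : Prop := ∀ V, Sat F V w φ

/-- `φ` is valid in the frame `F`. -/
def Valid (F : Frame) (φ : Formula) : Prop := ∀ V w, Sat F V w φ

/-- The weak width formula `Wid_n^+`, with `q` encoded as variable `0` and
`p_i` as variable `i+1`:
`q ∧ ◇(□¬q ∧ ⋀_{i≤n} ◇p_i) → ⋁_{0 ≤ i ≠ j ≤ n} ◇(p_i ∧ (p_j ∨ ◇p_j))`. -/
def widPlus (n : ℕ) : Formula :=
  .imp
    (.and (.var 0)
      (Formula.dia (.and (.box (Formula.neg (.var 0)))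
        (Formula.bigConj ((List.finRange (n + 1)).map fun i => Formula.dia (.var (i + 1)))))))
    (Formula.bigDisj ((List.finRange (n + 1)).flatMap fun i =>
      (List.finRange (n + 1)).flatMap fun j =>
        if i = j then []
        else [Formula.dia (.and (.var (i + 1))
          (.or (.var (j + 1)) (Formula.dia (.var (j + 1)))))]))

/-- `m ≼ n` iff `m = n = 0` or `0 < m ≤ n`. -/
def pre (m n : ℕ) : Prop := (m = 0 ∧ n = 0) ∨ (0 < m ∧ m ≤ n)

/-- A finite ω-labeled tree in standard representation: a root label, the list
of subtrees generated by the root's immediate successors labeled `0`, and the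
list of those labeled `> 0` (the last one having minimal root label). -/
inductive OTree where
  | node : ℕ → List OTree → List OTree → OTree

/-- The root label of an ω-tree. -/
def OTree.label : OTree → ℕ
  | node s _ _ => s

mutual
  /-- The height of an ω-tree. -/
  def OTree.height : OTree → ℕ
    | .node _ l r => 1 + max (OTree.heights l) (OTree.heights r)
  def OTree.heights : List OTree → ℕ
    | [] => 0
    | t :: ts => max t.height (OTree.heights ts)
end

mutual
  /-- The number of nodes labeled `0` in an ω-tree. -/
  def OTree.zeros : OTree → ℕ
    | .node s l r => (if s = 0 then 1 else 0) + OTree.zerosL l + OTree.zerosL r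
  def OTree.zerosL : List OTree → ℕ
    | [] => 0
    | t :: ts => t.zeros + OTree.zerosL ts
end

mutual
  /-- Well-formedness of the standard representation: subtrees in the first
  list have root label `0`, subtrees in the second list have positive root
  label, and the last of them has minimal root label. -/
  def OTree.wf : OTree → Prop
    | .node _ l r =>
      OTree.wfZ l ∧ OTree.wfP r ∧ (∀ a ∈ r.getLast?, ∀ t ∈ r, a.label ≤ t.label)
  def OTree.wfZ : List OTree → Prop
    | [] => True
    | t :: ts => t.label = 0 ∧ t.wf ∧ OTree.wfZ ts
  def OTree.wfP : List OTree → Prop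
    | [] => True
    | t :: ts => 0 < t.label ∧ t.wf ∧ OTree.wfP ts
end

/-- The order `⊑` on ω-trees: `TSub t t'` iff the root labels are `≼`-related,
the `0`-labeled subtree lists have the same length and are componentwise
related, and the positively labeled subtree lists are either both empty, or
both nonempty with the last of the first related to the last of the second and
a strictly monotone (Higman-style) embedding of the first list into the second
with componentwise relatedness. -/
inductive TSub : OTree → OTree → Prop where
  | nilR {s s' : ℕ} {l l' : List OTree} (hs : pre s s') (hlen : l.length = l'.length)
      (hl : ∀ i : Fin l.length, TSub (l.get i) (l'.get (Fin.cast hlen i))) :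
      TSub (.node s l []) (.node s' l' [])
  | consR {s s' : ℕ} {l l' r r' : List OTree} (hs : pre s s') (hlen : l.length = l'.length)
      (hl : ∀ i : Fin l.length, TSub (l.get i) (l'.get (Fin.cast hlen i)))
      (hr : r ≠ []) (hr' : r' ≠ [])
      (idx : Fin r.length → Fin r'.length) (hmono : StrictMono idx)
      (hcomp : ∀ i : Fin r.length, TSub (r.get i) (r'.get (idx i)))
      (hlast : ∀ a ∈ r.getLast?, ∀ b ∈ r'.getLast?, TSub a b) :
      TSub (.node s l r) (.node s' l' r')

/-- The restriction of a frame to a subset of its worlds. -/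
def Frame.restrict (F : Frame) (X : Set F.World) : Frame :=
  ⟨{x // x ∈ X}, fun a b => F.rel a.1 b.1⟩

/-- Cluster equivalence: `w ∼ u` iff `w = u` or `R w u ∧ R u w`. -/
def clEq (F : Frame) (w u : F.World) : Prop :=
  w = u ∨ (F.rel w u ∧ F.rel u w)

/-- `w ≤ u` in the inverse of the reflexive closure of the skeleton order:
`w`'s cluster is `≥` `u`'s cluster in the original order. -/
def leInv (F : Frame) (w u : F.World) : Prop := clEq F w u ∨ F.rel u w

/-- The inverse skeleton `sk(F)⁻¹` of `F` is a finite tree: the frame is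
finite, and the induced order on clusters is downward connected and has no
downward branching (it is automatically a partial order on clusters). -/
def SkInvTree (F : Frame) : Prop :=
  Finite F.World ∧
  (∀ m m' : F.World, ∃ w, leInv F w m ∧ leInv F w m') ∧
  (∀ m w w' : F.World, leInv F w m → leInv F w' m → (leInv F w w' ∨ leInv F w' w))

/-- `Represents t F` says that the ω-tree `t` is the representation tree
`rt(F)` of the frame `F`: the root of `t` corresponds to the final cluster `c`
of `F` (labeled by `|c|` if nondegenerate and `0` otherwise), and the subtrees
of the root represent the subframes of `F` obtained by removing `c`, split
into those whose final cluster is degenerate (label `0`) and the rest, with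
the last positively-labeled subtree of minimal root label. -/
inductive Represents : OTree → Frame → Prop where
  | mk {s : ℕ} {l r : List OTree} {F : Frame}
      (c : Set F.World) (part : ℕ → Set F.World)
      (hc : c.Nonempty)
      (hcfinal : ∀ x ∈ c, ∀ y, F.rel x y → y ∈ c)
      (hccluster : ∀ x ∈ c, ∀ y ∈ c, x ≠ y → F.rel x y)
      (hlabel : ((∃ x ∈ c, F.rel x x) ∧ s = Nat.card c) ∨ ((∀ x ∈ c, ¬ F.rel x x) ∧ s = 0))
      (hcover : ∀ w : F.World, w ∈ c ∨ ∃ i, i < (l ++ r).length ∧ w ∈ part i)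
      (hdisj : ∀ i j, i < (l ++ r).length → j < (l ++ r).length → i ≠ j →
          ∀ w, w ∈ part i → w ∉ part j)
      (hdisjc : ∀ i, i < (l ++ r).length → ∀ w ∈ part i, w ∉ c)
      (hne : ∀ i, i < (l ++ r).length → (part i).Nonempty)
      (hsee : ∀ i, i < (l ++ r).length → ∀ w ∈ part i, ∀ x ∈ c, F.rel w x)
      (hnorel : ∀ i j, i < (l ++ r).length → j < (l ++ r).length → i ≠ j →
          ∀ w ∈ part i, ∀ u ∈ part j, ¬ F.rel w u)
      (hclosed : ∀ i, i < (l ++ r).length → ∀ w ∈ part i, ∀ u, F.rel w u →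
          u ∈ c ∨ u ∈ part i)
      (hzero : ∀ t ∈ l, t.label = 0)
      (hpos : ∀ t ∈ r, 0 < t.label)
      (hmin : ∀ a ∈ r.getLast?, ∀ t ∈ r, a.label ≤ t.label)
      (hrec : ∀ i : Fin (l ++ r).length, Represents ((l ++ r).get i) (F.restrict (part i))) :
      Represents (.node s l r) F

/-! By induction on `t ⊑ t'`, build a reduction of `G` onto `F` piece by piece. The final
cluster of `G` goes onto the final cluster of `F`: since `s ≼ s'`, either both are irreflexive
points, or both are reflexive and `F`'s is no larger. A part of `G` below its final cluster that
`⊑` matches with a part of `F` is reduced onto that part by the induction hypothesis. An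
unmatched part of `G` has a positive label, so it can be collapsed onto the final (reflexive)
cluster of the last positively labelled part of `F`, which has the minimal positive label. A part
sees the final cluster and nothing else outside itself, so these maps glue to a reduction. -/

open Set

theorem exists_forall_mem_surjOn_of_natCard_le {α β : Type*} {d : Set α} {e : Set β}
    (hd : 0 < Nat.card d) (hde : Nat.card d ≤ Nat.card e) :
    ∃ τ : β → α, (∀ y, τ y ∈ d) ∧ SurjOn τ e d := by
  obtain ⟨⟨x₀, hx₀⟩, _⟩ := Nat.card_pos_iff.mp hd
  have : Finite e := (Nat.card_pos_iff.mp (hd.trans_le hde)).2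
  have := Fintype.ofFinite d
  have := Fintype.ofFinite e
  obtain ⟨ι⟩ : Nonempty (d ↪ e) := Function.Embedding.nonempty_of_card_le <| by
    simpa only [Nat.card_eq_fintype_card] using hde
  have : Nonempty d := ⟨⟨x₀, hx₀⟩⟩
  classical
  refine ⟨fun y => if h : y ∈ e then (Function.invFun ι ⟨y, h⟩ : d) else x₀,
    fun y => ?_, fun x hx => ⟨ι ⟨x, hx⟩, (ι ⟨x, hx⟩).2, ?_⟩⟩
  · dsimp only
    split_ifs
    exacts [Subtype.prop _, hx₀]
  · simp [Function.leftInverse_invFun ι.injective ⟨x, hx⟩]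

namespace Frame

instance restrict.isTrans (F : Frame) [IsTrans F.World F.rel] (X : Set F.World) :
    IsTrans (F.restrict X).World (F.restrict X).rel :=
  ⟨fun _ _ _ => _root_.trans (r := F.rel)⟩

instance restrict.finite (F : Frame) [Finite F.World] (X : Set F.World) :
    Finite (F.restrict X).World :=
  Subtype.finite

variable {F G : Frame}

structure IsPMorphismOn (G F : Frame) (Q : Set G.World) (P : Set F.World)
    (g : G.World → F.World) : Prop where
  mapsTo : MapsTo g Q P
  rel_map : ∀ w ∈ Q, ∀ u ∈ Q, G.rel w u → F.rel (g w) (g u)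
  exists_rel : ∀ w ∈ Q, ∀ v ∈ P, F.rel (g w) v → ∃ u ∈ Q, G.rel w u ∧ g u = v

theorem exists_isPMorphismOn_onto_cluster {Q e : Set G.World} {P d : Set F.World}
    (heQ : e ⊆ Q) (hdP : d ⊆ P) (hd : ∀ x ∈ d, ∀ y ∈ d, F.rel x y)
    (hd_final : ∀ x ∈ d, ∀ y ∈ P, F.rel x y → y ∈ d) (he : ∀ w ∈ Q, ∀ x ∈ e, G.rel w x)
    (hd_pos : 0 < Nat.card d) (hde : Nat.card d ≤ Nat.card e) :
    ∃ g, G.IsPMorphismOn F Q P g ∧ SurjOn g e d := by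
  obtain ⟨g, hgd, hg⟩ := exists_forall_mem_surjOn_of_natCard_le hd_pos hde
  refine ⟨g, ⟨fun w _ => hdP (hgd w), fun w _ u _ _ => hd _ (hgd w) _ (hgd u), ?_⟩, hg⟩
  intro w hw v hv hwv
  obtain ⟨u, hu, rfl⟩ := hg (hd_final _ (hgd w) v hv hwv)
  exact ⟨u, heQ hu, he w hw u hu, rfl⟩

/-- `s = τ(c)`: an irreflexive point has label `0`, a nondegenerate cluster its size. -/
def IsClusterOfLabel (F : Frame) (c : Set F.World) (s : ℕ) : Prop :=
  (s = 0 ∧ ∃ x, c = {x} ∧ ¬ F.rel x x) ∨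
    (0 < s ∧ Nat.card c = s ∧ ∀ x ∈ c, ∀ y ∈ c, F.rel x y)

theorem rel_of_mem_cluster [IsTrans F.World F.rel] {c : Set F.World}
    (hcl : ∀ x ∈ c, ∀ y ∈ c, x ≠ y → F.rel x y) {x₀ : F.World} (hx₀ : x₀ ∈ c)
    (hrefl : F.rel x₀ x₀) : ∀ x ∈ c, ∀ y ∈ c, F.rel x y := by
  have hrefl_all : ∀ x ∈ c, F.rel x x := fun x hx => by
    by_cases hxx₀ : x = x₀
    · exact hxx₀ ▸ hrefl
    · exact _root_.trans (hcl x hx x₀ hx₀ hxx₀) (hcl x₀ hx₀ x hx (Ne.symm hxx₀))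
  intro x hx y hy
  by_cases hxy : x = y
  · exact hxy ▸ hrefl_all x hx
  · exact hcl x hx y hy hxy

theorem isClusterOfLabel_of_cluster [IsTrans F.World F.rel] {c : Set F.World} {s : ℕ}
    (hfin : c.Finite) (hc : c.Nonempty) (hcl : ∀ x ∈ c, ∀ y ∈ c, x ≠ y → F.rel x y)
    (hlabel : ((∃ x ∈ c, F.rel x x) ∧ s = Nat.card c) ∨ ((∀ x ∈ c, ¬ F.rel x x) ∧ s = 0)) :
    F.IsClusterOfLabel c s := by
  rcases hlabel with ⟨⟨x₀, hx₀, hrefl⟩, rfl⟩ | ⟨hirrefl, rfl⟩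
  · have : Finite c := hfin.to_subtype
    have : Nonempty c := hc.to_subtype
    exact Or.inr ⟨Nat.card_pos, rfl, F.rel_of_mem_cluster hcl hx₀ hrefl⟩
  · obtain ⟨x₀, hx₀⟩ := hc
    refine Or.inl ⟨rfl, x₀, eq_singleton_iff_unique_mem.mpr ⟨hx₀, fun y hy => ?_⟩, hirrefl x₀ hx₀⟩
    by_contra hyx₀
    exact hirrefl y hy (_root_.trans (hcl y hy x₀ hx₀ hyx₀) (hcl x₀ hx₀ y hy (Ne.symm hyx₀)))

theorem exists_cluster_reduction {c : Set F.World} {c' : Set G.World} {s s' : ℕ}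
    (hs : pre s s') (hc : F.IsClusterOfLabel c s) (hc' : G.IsClusterOfLabel c' s') :
    ∃ σ, G.IsPMorphismOn F c' c σ ∧ SurjOn σ c' c := by
  rcases hs with ⟨rfl, rfl⟩ | ⟨hs, hss'⟩
  · obtain ⟨-, x, rfl, hx⟩ := hc.resolve_right (by omega)
    obtain ⟨-, x', rfl, hx'⟩ := hc'.resolve_right (by omega)
    refine ⟨fun _ => x, ⟨fun _ _ => rfl, ?_, ?_⟩, fun _ _ => ⟨x', rfl, by simp_all⟩⟩
    · rintro w rfl u rfl hx'x'
      exact absurd hx'x' hx'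
    · rintro w - v rfl hxx
      exact absurd hxx hx
  · obtain ⟨-, hcard, hc⟩ := hc.resolve_left (by omega)
    obtain ⟨-, hcard', hc'⟩ := hc'.resolve_left (by omega)
    exact exists_isPMorphismOn_onto_cluster subset_rfl subset_rfl hc (fun _ _ y hy _ => hy)
      hc' (by omega) (by omega)

/-- The decomposition of `F` at the root of `rt(F)`. -/
structure IsSplit (F : Frame) (c : Set F.World) (P : ℕ → Set F.World) (n : ℕ) : Prop where
  final : ∀ x ∈ c, ∀ y, F.rel x y → y ∈ c
  cover : ∀ w, w ∈ c ∨ ∃ i < n, w ∈ P i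
  disjoint : ∀ i j, i < n → j < n → i ≠ j → ∀ w, w ∈ P i → w ∉ P j
  not_mem_cluster : ∀ i < n, ∀ w ∈ P i, w ∉ c
  rel_cluster : ∀ i < n, ∀ w ∈ P i, ∀ x ∈ c, F.rel w x
  closed : ∀ i < n, ∀ w ∈ P i, ∀ u, F.rel w u → u ∈ c ∨ u ∈ P i

theorem IsSplit.exists_eqOn {α : Type*} {c' : Set G.World} {Q : ℕ → Set G.World} {n' : ℕ}
    (hG : G.IsSplit c' Q n') (σ : G.World → α) (g : Fin n' → G.World → α) :
    ∃ f, EqOn f σ c' ∧ ∀ k : Fin n', EqOn f (g k) (Q k) := by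
  classical
  refine ⟨fun w => if h : ∃ k : Fin n', w ∈ Q k then g h.choose w else σ w, ?_, ?_⟩
  · intro w hw
    have : ¬ ∃ k : Fin n', w ∈ Q k := fun ⟨k, hk⟩ => hG.not_mem_cluster k k.2 w hk hw
    simp only [dif_neg this]
  · intro k w hw
    have h : ∃ k : Fin n', w ∈ Q k := ⟨k, hw⟩
    have hk : h.choose = k := by_contra fun hne =>
      hG.disjoint _ _ h.choose.2 k.2 (Fin.val_ne_of_ne hne) w h.choose_spec hw
    simp only [dif_pos h, hk]

theorem IsSplit.reducible {c : Set F.World} {P : ℕ → Set F.World} {n : ℕ} {c' : Set G.World}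
    {Q : ℕ → Set G.World} {n' : ℕ} (hF : F.IsSplit c P n) (hG : G.IsSplit c' Q n')
    {σ : G.World → F.World} (hσ : G.IsPMorphismOn F c' c σ) (hσs : SurjOn σ c' c)
    {g : Fin n' → G.World → F.World}
    (hg : ∀ k : Fin n', ∃ i : Fin n, G.IsPMorphismOn F (Q k) (P i) (g k))
    (hgs : ∀ i : Fin n, ∃ k : Fin n', SurjOn (g k) (Q k) (P i)) : Reducible G F := by
  obtain ⟨f, hfc, hfQ⟩ := hG.exists_eqOn σ g
  refine ⟨f, fun v => ?_, fun w u hwu => ?_, fun w v hwv => ?_⟩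
  · rcases hF.cover v with hv | ⟨i, hi, hv⟩
    · obtain ⟨w, hw, rfl⟩ := hσs hv
      exact ⟨w, hfc hw⟩
    · obtain ⟨k, hk⟩ := hgs ⟨i, hi⟩
      obtain ⟨w, hw, rfl⟩ := hk hv
      exact ⟨w, hfQ k hw⟩
  · rcases hG.cover w with hw | ⟨k, hk, hw⟩
    · have hu := hG.final w hw u hwu
      rw [hfc hw, hfc hu]
      exact hσ.rel_map w hw u hu hwu
    · obtain ⟨i, hi⟩ := hg ⟨k, hk⟩
      rcases hG.closed k hk w hw u hwu with hu | hu
      · rw [hfQ ⟨k, hk⟩ hw, hfc hu]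
        exact hF.rel_cluster i i.2 _ (hi.mapsTo hw) _ (hσ.mapsTo hu)
      · rw [hfQ ⟨k, hk⟩ hw, hfQ ⟨k, hk⟩ hu]
        exact hi.rel_map w hw u hu hwu
  · rcases hG.cover w with hw | ⟨k, hk, hw⟩
    · rw [hfc hw] at hwv
      obtain ⟨u, hu, hwu, rfl⟩ := hσ.exists_rel w hw v (hF.final _ (hσ.mapsTo hw) v hwv) hwv
      exact ⟨u, hwu, hfc hu⟩
    · obtain ⟨i, hi⟩ := hg ⟨k, hk⟩
      rw [hfQ ⟨k, hk⟩ hw] at hwv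
      rcases hF.closed i i.2 _ (hi.mapsTo hw) v hwv with hv | hv
      · obtain ⟨u, hu, rfl⟩ := hσs hv
        exact ⟨u, hG.rel_cluster k hk w hw u hu, hfc hu⟩
      · obtain ⟨u, hu, hwu, rfl⟩ := hi.exists_rel w hw v hv hwv
        exact ⟨u, hwu, hfQ ⟨k, hk⟩ hu⟩

theorem exists_isPMorphismOn_of_injective {P : ℕ → Set F.World} {Q : ℕ → Set G.World}
    {n n' : ℕ} {ι : Fin n → Fin n'} (hι : Function.Injective ι)
    (hred : ∀ i, ∃ g, G.IsPMorphismOn F (Q (ι i)) (P i) g ∧ SurjOn g (Q (ι i)) (P i))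
    (hrest : ∀ k : Fin n', k ∉ range ι → ∃ i : Fin n, ∃ g, G.IsPMorphismOn F (Q k) (P i) g) :
    ∃ g : Fin n' → G.World → F.World,
      (∀ k : Fin n', ∃ i : Fin n, G.IsPMorphismOn F (Q k) (P i) (g k)) ∧
      ∀ i, SurjOn (g (ι i)) (Q (ι i)) (P i) := by
  have : ∀ k : Fin n', ∃ g, (∃ i : Fin n, G.IsPMorphismOn F (Q k) (P i) g) ∧
      ∀ i, ι i = k → SurjOn g (Q k) (P i) := by
    intro k
    by_cases hk : k ∈ range ι
    · obtain ⟨i, rfl⟩ := hk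
      obtain ⟨g, hg, hgs⟩ := hred i
      exact ⟨g, ⟨i, hg⟩, fun j hj => hι hj ▸ hgs⟩
    · obtain ⟨i, g, hg⟩ := hrest k hk
      exact ⟨g, ⟨i, hg⟩, fun j hj => absurd ⟨j, hj⟩ hk⟩
  choose g hg hgs using this
  exact ⟨g, hg, fun i => hgs _ i rfl⟩

end Frame

theorem Reducible.exists_isPMorphismOn_surjOn {F G : Frame} [Nonempty F.World]
    {P : Set F.World} {Q : Set G.World} (h : Reducible (G.restrict Q) (F.restrict P)) :
    ∃ g, G.IsPMorphismOn F Q P g ∧ SurjOn g Q P := by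
  classical
  obtain ⟨f, hsurj, hrel, hback⟩ := h
  refine ⟨fun w => if hw : w ∈ Q then (f ⟨w, hw⟩).1 else Classical.arbitrary _,
    ⟨fun w hw => ?_, fun w hw u hu hwu => ?_, fun w hw v hv hwv => ?_⟩, fun v hv => ?_⟩
  · simpa only [dif_pos hw] using (f ⟨w, hw⟩).2
  · simp only [dif_pos hw, dif_pos hu]
    exact hrel ⟨w, hw⟩ ⟨u, hu⟩ hwu
  · simp only [dif_pos hw] at hwv
    obtain ⟨⟨u, hu⟩, hwu, hfu⟩ := hback ⟨w, hw⟩ ⟨v, hv⟩ hwv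
    exact ⟨u, hu, hwu, by simp only [dif_pos hu, hfu]⟩
  · obtain ⟨⟨w, hw⟩, hfw⟩ := hsurj ⟨v, hv⟩
    exact ⟨w, hw, by simp only [dif_pos hw, hfw]⟩

theorem TSub.pre_label {t t' : OTree} (h : TSub t t') : pre t.label t'.label := by
  cases h <;> assumption

namespace Represents

variable {F G : Frame}

theorem exists_isSplit [Finite F.World] [IsTrans F.World F.rel] {s : ℕ} {l r : List OTree}
    (h : Represents (.node s l r) F) :
    ∃ c P, F.IsSplit c P (l ++ r).length ∧ c.Nonempty ∧ F.IsClusterOfLabel c s ∧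
      ∀ i : Fin (l ++ r).length, Represents (l ++ r)[i] (F.restrict (P i)) := by
  obtain ⟨c, P, hc, hfinal, hcl, hlabel, hcover, hdisj, hdisjc, -, hsee, -, hclosed, -, -, -,
    hrec⟩ := h
  exact ⟨c, P, ⟨hfinal, hcover, hdisj, hdisjc, hsee, hclosed⟩, hc,
    F.isClusterOfLabel_of_cluster c.toFinite hc hcl hlabel, hrec⟩

theorem label_pos {s : ℕ} {l r : List OTree} (h : Represents (.node s l r) F) :
    ∀ t ∈ r, 0 < t.label := by
  cases h
  assumption

theorem getLast_label_le {s : ℕ} {l r : List OTree} (h : Represents (.node s l r) F) :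
    ∀ a ∈ r.getLast?, ∀ t ∈ r, a.label ≤ t.label := by
  cases h
  assumption

theorem exists_final_cluster [IsTrans F.World F.rel] {t : OTree} (h : Represents t F)
    (hpos : 0 < t.label) :
    ∃ c : Set F.World, Nat.card c = t.label ∧ (∀ x ∈ c, ∀ y ∈ c, F.rel x y) ∧
      (∀ w, ∀ x ∈ c, F.rel w x) ∧ (∀ x ∈ c, ∀ y, F.rel x y → y ∈ c) := by
  obtain ⟨c, part, -, hfinal, hcl, hlabel, hcover, -, -, -, hsee, -, -, -, -, -, -⟩ := h
  obtain ⟨⟨x₀, hx₀, hrefl⟩, hs⟩ := hlabel.resolve_right fun h => hpos.ne' h.2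
  have hc := F.rel_of_mem_cluster hcl hx₀ hrefl
  refine ⟨c, hs.symm, hc, fun w x hx => ?_, hfinal⟩
  rcases hcover w with hw | ⟨i, hi, hw⟩
  exacts [hc w hw x hx, hsee i hi w hw x hx]

theorem exists_final_cluster_restrict [IsTrans F.World F.rel] {P : Set F.World} {t : OTree}
    (h : Represents t (F.restrict P)) (hpos : 0 < t.label) :
    ∃ d ⊆ P, Nat.card d = t.label ∧ (∀ x ∈ d, ∀ y ∈ d, F.rel x y) ∧
      (∀ w ∈ P, ∀ x ∈ d, F.rel w x) ∧ (∀ x ∈ d, ∀ y ∈ P, F.rel x y → y ∈ d) := by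
  obtain ⟨c, hcard, hc, hsee, hfinal⟩ := h.exists_final_cluster hpos
  refine ⟨(fun x : (F.restrict P).World => x.1) '' c, fun _ ⟨x, _, hx⟩ => hx ▸ x.2, ?_, ?_, ?_,
    ?_⟩
  · exact (Nat.card_image_of_injective (fun _ _ => Subtype.ext) c).trans hcard
  · rintro _ ⟨x, hx, rfl⟩ _ ⟨y, hy, rfl⟩
    exact hc x hx y hy
  · rintro w hw _ ⟨x, hx, rfl⟩
    exact hsee ⟨w, hw⟩ x hx
  · rintro _ ⟨x, hx, rfl⟩ y hy hxy
    exact ⟨⟨y, hy⟩, hfinal x hx ⟨y, hy⟩ hxy, rfl⟩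

theorem exists_isPMorphismOn_of_label_le [IsTrans F.World F.rel] [IsTrans G.World G.rel]
    {P : Set F.World} {Q : Set G.World} {tP tQ : OTree} (hP : Represents tP (F.restrict P))
    (hQ : Represents tQ (G.restrict Q)) (hpos : 0 < tP.label) (hle : tP.label ≤ tQ.label) :
    ∃ g, G.IsPMorphismOn F Q P g := by
  obtain ⟨d, hdP, hdcard, hd, -, hd_final⟩ := hP.exists_final_cluster_restrict hpos
  obtain ⟨e, heQ, hecard, -, he, -⟩ := hQ.exists_final_cluster_restrict (hpos.trans_le hle)
  obtain ⟨g, hg, -⟩ := Frame.exists_isPMorphismOn_onto_cluster heQ hdP hd hd_final he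
    (hdcard ▸ hpos) (hdcard ▸ hecard ▸ hle)
  exact ⟨g, hg⟩

theorem exists_label_le_of_mem {s s' : ℕ} {l l' r r' : List OTree}
    (hF : Represents (.node s l r) F) (hG : Represents (.node s' l' r') G) (hr : r ≠ [])
    (hr' : r' ≠ []) (hlast : TSub (r.getLast hr) (r'.getLast hr')) {t' : OTree} (ht' : t' ∈ r') :
    ∃ i : Fin (l ++ r).length, 0 < (l ++ r)[i].label ∧ (l ++ r)[i].label ≤ t'.label := by
  obtain ⟨i, hi, hi_last⟩ := List.getElem_of_mem (List.mem_append_right l (List.getLast_mem hr))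
  have hpos := hF.label_pos _ (List.getLast_mem hr)
  refine ⟨⟨i, hi⟩, ?_, ?_⟩ <;> simp only [Fin.getElem_fin, hi_last]
  · exact hpos
  · exact (hlast.pre_label.resolve_left (by omega)).2.trans
      (hG.getLast_label_le _ (List.getLast?_eq_some_getLast hr') _ ht')

end Represents

def TreeReducible (t t' : OTree) : Prop :=
  ∀ (F G : Frame) [Finite F.World] [Finite G.World] [IsTrans F.World F.rel]
    [IsTrans G.World G.rel], Represents t F → Represents t' G → Reducible G F

theorem Represents.reducible_of_injective {F G : Frame} [Finite F.World] [Finite G.World]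
    [IsTrans F.World F.rel] [IsTrans G.World G.rel] {s s' : ℕ} {l l' r r' : List OTree}
    (hF : Represents (.node s l r) F) (hG : Represents (.node s' l' r') G) (hs : pre s s')
    {ι : Fin (l ++ r).length → Fin (l' ++ r').length} (hι : Function.Injective ι)
    (hmatch : ∀ i, TreeReducible (l ++ r)[i] (l' ++ r')[ι i])
    (hrest : ∀ k, k ∉ range ι → ∃ i : Fin (l ++ r).length,
      0 < (l ++ r)[i].label ∧ (l ++ r)[i].label ≤ (l' ++ r')[k].label) :
    Reducible G F := by
  obtain ⟨c, P, hF, hc, hcF, hrec⟩ := hF.exists_isSplit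
  obtain ⟨c', Q, hG, -, hcG, hrec'⟩ := hG.exists_isSplit
  have : Nonempty F.World := hc.to_subtype.map Subtype.val
  obtain ⟨σ, hσ, hσs⟩ := Frame.exists_cluster_reduction hs hcF hcG
  obtain ⟨g, hg, hgs⟩ := Frame.exists_isPMorphismOn_of_injective hι
    (fun i => (hmatch i _ _ (hrec i) (hrec' (ι i))).exists_isPMorphismOn_surjOn)
    (fun k hk => let ⟨i, hpos, hle⟩ := hrest k hk
      ⟨i, (hrec i).exists_isPMorphismOn_of_label_le (hrec' k) hpos hle⟩)
  exact hF.reducible hG hσ hσs hg fun i => ⟨ι i, hgs i⟩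

theorem TreeReducible.node_nil {s s' : ℕ} {l l' : List OTree} (hs : pre s s')
    (hlen : l.length = l'.length)
    (hl : ∀ i : Fin l.length, TreeReducible (l.get i) (l'.get (Fin.cast hlen i))) :
    TreeReducible (.node s l []) (.node s' l' []) := by
  intro F G _ _ _ _ hF hG
  have hlen' : (l ++ []).length = (l' ++ []).length := by simpa using hlen
  refine hF.reducible_of_injective hG hs (ι := Fin.cast hlen') (Fin.cast_injective hlen')
    (fun i => ?_) (fun k hk => absurd ⟨Fin.cast hlen'.symm k, rfl⟩ hk)
  simpa using hl ⟨i, by simpa using i.2⟩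

theorem TreeReducible.node_cons {s s' : ℕ} {l l' r r' : List OTree} (hs : pre s s')
    (hlen : l.length = l'.length)
    (hl : ∀ i : Fin l.length, TreeReducible (l.get i) (l'.get (Fin.cast hlen i)))
    {idx : Fin r.length → Fin r'.length} (hidx : Function.Injective idx)
    (hr : ∀ i : Fin r.length, TreeReducible (r.get i) (r'.get (idx i))) (hr_ne : r ≠ [])
    (hr'_ne : r' ≠ []) (hlast : TSub (r.getLast hr_ne) (r'.getLast hr'_ne)) :
    TreeReducible (.node s l r) (.node s' l' r') := by
  intro F G _ _ _ _ hF hG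
  let e : Fin l.length ⊕ Fin r.length ≃ Fin (l ++ r).length :=
    finSumFinEquiv.trans (finCongr List.length_append.symm)
  let e' : Fin l'.length ⊕ Fin r'.length ≃ Fin (l' ++ r').length :=
    finSumFinEquiv.trans (finCongr List.length_append.symm)
  have hι : Function.Injective (e' ∘ Sum.map (Fin.cast hlen) idx ∘ e.symm) :=
    e'.injective.comp <| (Sum.map_injective.mpr ⟨Fin.cast_injective hlen, hidx⟩).comp
      e.symm.injective
  refine hF.reducible_of_injective hG hs hι (fun i => ?_) (fun k hk => ?_)
  · obtain ⟨a | b, rfl⟩ := e.surjective i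
    · have ha : (a : ℕ) < l'.length := hlen ▸ a.2
      simpa [e, e', List.getElem_append_left, ha] using hl a
    · simpa [e, e', List.getElem_append_right] using hr b
  · obtain ⟨a | b, rfl⟩ := e'.surjective k
    · exact absurd ⟨e (.inl (Fin.cast hlen.symm a)), by simp⟩ hk
    · refine hF.exists_label_le_of_mem hG hr_ne hr'_ne hlast ?_
      simp [e', List.getElem_append_right]

theorem TSub.treeReducible {t t' : OTree} (h : TSub t t') : TreeReducible t t' := by
  induction h with
  | nilR hs hlen _ ih => exact .node_nil hs hlen ih
  | consR hs hlen _ hr hr' _ hmono _ hlast ihl ihr _ =>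
    exact .node_cons hs hlen ihl hmono.injective ihr hr hr'
      (hlast _ (List.getLast?_eq_some_getLast hr) _ (List.getLast?_eq_some_getLast hr'))

/-- Let `F` and `G` be finite transitive frames validating `Wid₁⁺` whose
inverse skeletons are finite trees, with representation trees `t = rt F` and
`t' = rt G`. If `t ⊑ t'`, then `G` is reducible to `F`. -/
theorem tsub_reprTrees_reducible (F G : Frame)
    (htrF : ∀ a b c, F.rel a b → F.rel b c → F.rel a c)
    (htrG : ∀ a b c, G.rel a b → G.rel b c → G.rel a c)
    (hwF : Valid F (widPlus 1)) (hwG : Valid G (widPlus 1))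
    (htreeF : SkInvTree F) (htreeG : SkInvTree G)
    (t t' : OTree) (ht : Represents t F) (ht' : Represents t' G)
    (hsub : TSub t t') :
    Reducible G F := by
  have : IsTrans F.World F.rel := ⟨htrF⟩
  have : IsTrans G.World G.rel := ⟨htrG⟩
  have := htreeF.1
  have := htreeG.1
  exact hsub.treeReducible F G ht ht'
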